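/- Let p be a prime, n ≥ 1, T ∈ GL(n, ℚ_p) and a ∈ ℚ_p^n \ {0} with ‖T^{-1}(a)‖_p ≠ 1. Then the map T̄_a : S_n → S_n, T̄_a(x) = ‖a + T(x)‖_p · (a + T(x)), is continuous and injective. -/

import Mathlib

open scoped MatrixGroups

/-- The real number `r`, assumed to be an integer power of `p`, interpreted as the
corresponding scalar in `ℚ_p` (junk value otherwise). -/
noncomputable def realToPadic (p : ℕ) [Fact p.Prime] (r : ℝ) : ℚ_[p] :=
  (p : ℚ_[p]) ^ ⌊Real.logb p r⌋

/-- The `affine` map `T̄_a` on the `p`-adic unit sphere: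
`T̄_a(x) = ‖a + T(x)‖_p ⬝ (a + T(x))`. -/
noncomputable def affineSphereMap (p : ℕ) [Fact p.Prime] {n : ℕ}
    (T : Matrix (Fin n) (Fin n) ℚ_[p]) (a : Fin n → ℚ_[p]) (y : Fin n → ℚ_[p]) :
    Fin n → ℚ_[p] :=
  realToPadic p ‖a + T.mulVec y‖ • (a + T.mulVec y)

/-!
Write `b = T⁻¹ a`. Since `‖b‖ ≠ 1`, `a + T x = T (b + x)` never vanishes on the sphere,
and `T̄_a x = c_x • (a + T x)` for a power `c_x` of `p`. In an ultrametric space the norm is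
locally constant away from `0`, so `c_x` is locally constant, which gives continuity.
If `T̄_a x = T̄_a y`, then `c_x • (b + x) = c_y • (b + y)`; were `‖c_x‖ ≠ ‖c_y‖`, comparing
norms in `(c_x - c_y) • b = c_y • y - c_x • x` would force `‖b‖ = 1`. Hence `c_x = c_y`
and `x = y`.
-/

open Matrix Filter Topology

namespace IsUltrametricDist

lemma eventually_norm_eq {E : Type*} [SeminormedAddCommGroup E] [IsUltrametricDist E] {v : E}
    (hv : ‖v‖ ≠ 0) : ∀ᶠ w in 𝓝 v, ‖w‖ = ‖v‖ := by
  have hsphere : Metric.sphere 0 ‖v‖ ∈ 𝓝 v :=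
    (isOpen_sphere (0 : E) hv).mem_nhds (mem_sphere_zero_iff_norm.mpr rfl)
  filter_upwards [hsphere] with w hw using mem_sphere_zero_iff_norm.mp hw

lemma continuousAt_comp_norm {E X : Type*} [SeminormedAddCommGroup E] [IsUltrametricDist E]
    [TopologicalSpace X] (f : ℝ → X) {v : E} (hv : ‖v‖ ≠ 0) :
    ContinuousAt (fun w ↦ f ‖w‖) v :=
  continuousAt_const.congr <| (eventually_norm_eq hv).mono fun _ hw ↦ congrArg f hw.symm

lemma norm_eq_of_smul_add_eq_smul_add {𝕜 E : Type*} [NormedField 𝕜] [IsUltrametricDist 𝕜]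
    [SeminormedAddCommGroup E] [NormedSpace 𝕜 E] [IsUltrametricDist E] {b x y : E} {c d : 𝕜}
    (hx : ‖x‖ = 1) (hy : ‖y‖ = 1) (hb : ‖b‖ ≠ 1) (h : c • (b + x) = d • (b + y)) :
    ‖c‖ = ‖d‖ := by
  by_contra hcd
  have hshift : (c - d) • b = d • y - c • x := by
    rw [sub_smul, sub_eq_sub_iff_add_eq_add, ← smul_add, add_comm (d • y), ← smul_add, h]
  have hcd_norm : ‖c - d‖ = max ‖c‖ ‖d‖ := by
    rw [sub_eq_add_neg, norm_add_eq_max_of_norm_ne_norm (by rwa [norm_neg]), norm_neg]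
  have hdy : ‖d • y‖ = ‖d‖ := by rw [norm_smul, hy, mul_one]
  have hcx : ‖-(c • x)‖ = ‖c‖ := by rw [norm_neg, norm_smul, hx, mul_one]
  have hxy_norm : ‖d • y - c • x‖ = max ‖c‖ ‖d‖ := by
    rw [sub_eq_add_neg, norm_add_eq_max_of_norm_ne_norm (by rw [hdy, hcx]; exact Ne.symm hcd),
      hdy, hcx, max_comm]
  have hmax_pos : 0 < max ‖c‖ ‖d‖ := by
    rcases lt_or_gt_of_ne hcd with hlt | hlt
    · exact lt_max_of_lt_right ((norm_nonneg c).trans_lt hlt)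
    · exact lt_max_of_lt_left ((norm_nonneg d).trans_lt hlt)
  apply hb
  have := congrArg norm hshift
  rw [norm_smul, hcd_norm, hxy_norm] at this
  exact (mul_eq_left₀ hmax_pos.ne').mp this

end IsUltrametricDist

lemma Pi.exists_norm_eq_norm_apply {ι : Type*} [Fintype ι] [Nonempty ι] {G : ι → Type*}
    [∀ i, SeminormedAddCommGroup (G i)] (f : ∀ i, G i) : ∃ i, ‖f‖ = ‖f i‖ := by
  obtain ⟨i, -, hi⟩ := Finset.exists_mem_eq_sup Finset.univ Finset.univ_nonempty
    fun i ↦ ‖f i‖₊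
  exact ⟨i, by rw [← coe_nnnorm, Pi.nnnorm_def, hi, coe_nnnorm]⟩

namespace Padic

variable {p : ℕ} [hp : Fact p.Prime]

lemma norm_p_zpow_injective : Function.Injective fun m : ℤ ↦ ‖(p : ℚ_[p]) ^ m‖ := by
  have hp1 : (1 : ℝ) < p := by exact_mod_cast hp.out.one_lt
  intro m k h
  simp only [norm_p_zpow] at h
  exact neg_injective (zpow_right_injective₀ (by linarith) hp1.ne' h)

lemma exists_pi_norm_eq_zpow {ι : Type*} [Fintype ι] {v : ι → ℚ_[p]} (hv : v ≠ 0) :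
    ∃ m : ℤ, ‖v‖ = (p : ℝ) ^ m := by
  obtain ⟨j, -⟩ := Function.ne_iff.mp hv
  have : Nonempty ι := ⟨j⟩
  obtain ⟨i, hi⟩ := Pi.exists_norm_eq_norm_apply v
  have hvi : v i ≠ 0 := by
    rw [← norm_ne_zero_iff, ← hi]
    exact norm_ne_zero_iff.mpr hv
  exact ⟨-(v i).valuation, by rw [hi, norm_eq_zpow_neg_valuation hvi]⟩

end Padic

lemma realToPadic_zpow (p : ℕ) [hp : Fact p.Prime] (m : ℤ) :
    realToPadic p ((p : ℝ) ^ m) = (p : ℚ_[p]) ^ m := by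
  have hp1 : (1 : ℝ) < p := by exact_mod_cast hp.out.one_lt
  rw [realToPadic, ← Real.rpow_intCast, Real.logb_rpow (by linarith) hp1.ne', Int.floor_intCast]

section affineSphereMap

variable {p : ℕ} [Fact p.Prime] {n : ℕ}

lemma affineSphereMap_eq_zpow_smul (T : Matrix (Fin n) (Fin n) ℚ_[p]) (a : Fin n → ℚ_[p])
    {x : Fin n → ℚ_[p]} (hx : a + T *ᵥ x ≠ 0) :
    ∃ m : ℤ, affineSphereMap p T a x = (p : ℚ_[p]) ^ m • (a + T *ᵥ x) := by
  obtain ⟨m, hm⟩ := Padic.exists_pi_norm_eq_zpow hx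
  exact ⟨m, by rw [affineSphereMap, hm, realToPadic_zpow]⟩

lemma continuousOn_affineSphereMap (T : Matrix (Fin n) (Fin n) ℚ_[p]) (a : Fin n → ℚ_[p])
    {s : Set (Fin n → ℚ_[p])} (hs : ∀ x ∈ s, a + T *ᵥ x ≠ 0) :
    ContinuousOn (affineSphereMap p T a) s := by
  have hT : Continuous fun x ↦ a + T *ᵥ x :=
    continuous_const.add (Matrix.mulVecLin T).continuous_of_finiteDimensional
  intro x hx
  refine ContinuousAt.continuousWithinAt ?_
  have hscalar : ContinuousAt (fun y ↦ realToPadic p ‖a + T *ᵥ y‖) x :=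
    (IsUltrametricDist.continuousAt_comp_norm (realToPadic p)
      (norm_ne_zero_iff.mpr (hs x hx))).comp (f := (a + T *ᵥ ·)) hT.continuousAt
  exact hscalar.smul hT.continuousAt

lemma inv_mulVec_add_mulVec (T : GL (Fin n) ℚ_[p]) (a x : Fin n → ℚ_[p]) :
    (↑T⁻¹ : Matrix (Fin n) (Fin n) ℚ_[p]) *ᵥ (a + (T : Matrix (Fin n) (Fin n) ℚ_[p]) *ᵥ x) =
      (↑T⁻¹ : Matrix (Fin n) (Fin n) ℚ_[p]) *ᵥ a + x := by
  rw [mulVec_add, mulVec_mulVec, Units.inv_mul, one_mulVec]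

lemma add_mulVec_ne_zero (T : GL (Fin n) ℚ_[p]) {a x : Fin n → ℚ_[p]}
    (ha : ‖(↑T⁻¹ : Matrix (Fin n) (Fin n) ℚ_[p]) *ᵥ a‖ ≠ 1) (hx : ‖x‖ = 1) :
    a + (T : Matrix (Fin n) (Fin n) ℚ_[p]) *ᵥ x ≠ 0 := by
  intro h
  have := inv_mulVec_add_mulVec T a x
  rw [h, mulVec_zero, eq_comm, add_eq_zero_iff_eq_neg] at this
  rw [this, norm_neg] at ha
  exact ha hx

lemma injOn_affineSphereMap (T : GL (Fin n) ℚ_[p]) {a : Fin n → ℚ_[p]}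
    (ha : ‖(↑T⁻¹ : Matrix (Fin n) (Fin n) ℚ_[p]) *ᵥ a‖ ≠ 1) :
    Set.InjOn (affineSphereMap p (T : Matrix (Fin n) (Fin n) ℚ_[p]) a)
      (Metric.sphere 0 1) := by
  intro x hx y hy hxy
  rw [mem_sphere_zero_iff_norm] at hx hy
  obtain ⟨mx, hmx⟩ := affineSphereMap_eq_zpow_smul _ a (add_mulVec_ne_zero T ha hx)
  obtain ⟨my, hmy⟩ := affineSphereMap_eq_zpow_smul _ a (add_mulVec_ne_zero T ha hy)
  have hshift := congrArg ((↑T⁻¹ : Matrix (Fin n) (Fin n) ℚ_[p]) *ᵥ ·)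
    (hmx.symm.trans (hxy.trans hmy))
  simp only [mulVec_smul, inv_mulVec_add_mulVec] at hshift
  obtain rfl : mx = my := Padic.norm_p_zpow_injective
    (IsUltrametricDist.norm_eq_of_smul_add_eq_smul_add hx hy ha hshift)
  have hp : (p : ℚ_[p]) ≠ 0 := Nat.cast_ne_zero.mpr (Fact.out : p.Prime).ne_zero
  exact add_left_cancel (smul_right_injective _ (zpow_ne_zero mx hp) hshift)

end affineSphereMap

theorem stmt13_general (p : ℕ) [Fact p.Prime] (n : ℕ) (T : GL (Fin n) ℚ_[p])
    (a : Fin n → ℚ_[p])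
    (hnorm : ‖((T⁻¹ : GL (Fin n) ℚ_[p]) : Matrix (Fin n) (Fin n) ℚ_[p]).mulVec a‖ ≠ 1) :
    ContinuousOn (affineSphereMap p (T : Matrix (Fin n) (Fin n) ℚ_[p]) a)
        (Metric.sphere (0 : Fin n → ℚ_[p]) 1) ∧
      Set.InjOn (affineSphereMap p (T : Matrix (Fin n) (Fin n) ℚ_[p]) a)
        (Metric.sphere (0 : Fin n → ℚ_[p]) 1) :=
  ⟨continuousOn_affineSphereMap _ a fun _ hx ↦
      add_mulVec_ne_zero T hnorm (mem_sphere_zero_iff_norm.mp hx),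
    injOn_affineSphereMap T hnorm⟩

/-- For `T ∈ GL(n, ℚ_p)` and `a ≠ 0` with `‖T⁻¹(a)‖_p ≠ 1`, the map `T̄_a` is continuous
and injective on the `p`-adic unit sphere. -/
theorem stmt13 (p : ℕ) [Fact p.Prime] (n : ℕ) (hn : 1 ≤ n) (T : GL (Fin n) ℚ_[p])
    (a : Fin n → ℚ_[p]) (ha : a ≠ 0)
    (hnorm : ‖((T⁻¹ : GL (Fin n) ℚ_[p]) : Matrix (Fin n) (Fin n) ℚ_[p]).mulVec a‖ ≠ 1) :
    ContinuousOn (affineSphereMap p (T : Matrix (Fin n) (Fin n) ℚ_[p]) a)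
        (Metric.sphere (0 : Fin n → ℚ_[p]) 1) ∧
      Set.InjOn (affineSphereMap p (T : Matrix (Fin n) (Fin n) ℚ_[p]) a)
        (Metric.sphere (0 : Fin n → ℚ_[p]) 1) :=
  stmt13_general p n T a hnorm
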